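/- Let β, m, L > 0 and 0 < s < 1/2, and set ν_k = β^{-1}((2πk/L)² + m²)^{-1} for k ∈ ℤ. Then for every t > 0: Σ_{k∈ℤ} e^{−t ν_k^{2s−1}} < ∞, the family (1 − e^{−t ν_k^{2s−1}})_{k∈ℤ} is multipliable with nonzero product, and consequently ∏_{k∈ℤ} (1 − e^{−t ν_k^{2s−1}})^{-1} is finite. -/

import Mathlib

/-!
Since `2s - 1 < 0`, the exponent `ν_k ^ (2s-1) = (β((2πk/L)² + m²)) ^ (1-2s)` grows at least
like a multiple of `|k| ^ (2(1-2s))`, so `e^{-t ν_k^{2s-1}}` decays faster than `|k|⁻²` and is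
summable over `ℤ`. In a complete normed ring, a product `∏ (1 - x_k)` with `∑ ‖x_k‖ < ∞` and no
factor zero converges to a nonzero limit, and a nonzero convergent product can be inverted.
-/

open Real Filter Asymptotics

theorem summable_int_exp_neg_mul_abs_rpow {c p : ℝ} (hc : 0 < c) (hp : 0 < p) :
    Summable fun k : ℤ => exp (-c * |(k : ℝ)| ^ p) := by
  have habs : Tendsto (fun k : ℤ => |(k : ℝ)| ^ p) cofinite atTop :=
    (tendsto_rpow_atTop hp).comp (tendsto_norm_cocompact_atTop.comp Int.tendsto_coe_cofinite)
  have hO : (fun k : ℤ => exp (-c * |(k : ℝ)| ^ p)) =O[cofinite]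
      fun k : ℤ => |(k : ℝ)| ^ (-2 : ℝ) := by
    refine ((isLittleO_exp_neg_mul_rpow_atTop hc (-2 / p)).comp_tendsto habs).isBigO.congr_right
      fun k => ?_
    simp only [Function.comp_apply]
    rw [← rpow_mul (abs_nonneg _), mul_div_cancel₀ _ hp.ne']
  exact summable_of_isBigO (summable_abs_int_rpow one_lt_two) hO

section OneSub

variable {ι R : Type*} [NormedCommRing R] [NormOneClass R] [CompleteSpace R] {x : ι → R}

theorem multipliable_one_sub_of_summable (hx : Summable (‖x ·‖)) :
    Multipliable fun i => 1 - x i := by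
  simpa only [sub_eq_add_neg] using multipliable_one_add_of_summable (f := fun i => -x i)
    (by simp only [norm_neg]; exact hx)

theorem tprod_one_sub_ne_zero_of_summable [NormMulClass R] (hx1 : ∀ i, x i ≠ 1)
    (hx : Summable (‖x ·‖)) : ∏' i, (1 - x i) ≠ 0 := by
  simpa only [sub_eq_add_neg] using tprod_one_add_ne_zero_of_summable (f := fun i => -x i)
    (fun i => by rw [← sub_eq_add_neg, sub_ne_zero]; exact (hx1 i).symm)
    (by simp only [norm_neg]; exact hx)

end OneSub

/-- The eigenvalue `ν_k` of `β⁻¹(m² - Δ)⁻¹` on the circle of circumference `L`. -/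
noncomputable def covEigenvalue (β m L : ℝ) (k : ℤ) : ℝ := β⁻¹ * ((2 * π * k / L) ^ 2 + m ^ 2)⁻¹

section CovEigenvalue

variable {β m L : ℝ}

theorem covEigenvalue_pos (hβ : 0 < β) (hm : 0 < m) (k : ℤ) : 0 < covEigenvalue β m L k := by
  unfold covEigenvalue; positivity

theorem covEigenvalue_rpow_eq (hβ : 0 ≤ β) (k : ℤ) (s : ℝ) :
    covEigenvalue β m L k ^ (2 * s - 1) =
      (β * ((2 * π * k / L) ^ 2 + m ^ 2)) ^ (1 - 2 * s) := by
  have hw : 0 ≤ β * ((2 * π * k / L) ^ 2 + m ^ 2) := by positivity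
  rw [covEigenvalue, ← mul_inv, inv_rpow hw, ← rpow_neg hw, neg_sub]

theorem le_covEigenvalue_rpow (hβ : 0 < β) (k : ℤ) {s : ℝ} (hs : s < 1 / 2) :
    (β * (2 * π / L) ^ 2) ^ (1 - 2 * s) * |(k : ℝ)| ^ (2 * (1 - 2 * s)) ≤
      covEigenvalue β m L k ^ (2 * s - 1) := by
  have he : 0 ≤ 1 - 2 * s := by linarith
  have hk : (2 * π * k / L) ^ 2 = (2 * π / L) ^ 2 * |(k : ℝ)| ^ 2 := by rw [sq_abs]; ring
  calc (β * (2 * π / L) ^ 2) ^ (1 - 2 * s) * |(k : ℝ)| ^ (2 * (1 - 2 * s))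
      = (β * (2 * π * k / L) ^ 2) ^ (1 - 2 * s) := by
        rw [hk, ← mul_assoc, mul_rpow (y := |(k : ℝ)| ^ 2) (by positivity) (by positivity),
          ← rpow_natCast_mul (abs_nonneg _), Nat.cast_ofNat]
    _ ≤ (β * ((2 * π * k / L) ^ 2 + m ^ 2)) ^ (1 - 2 * s) := by
        gcongr
        exact le_add_of_nonneg_right (sq_nonneg m)
    _ = covEigenvalue β m L k ^ (2 * s - 1) := (covEigenvalue_rpow_eq hβ.le k s).symm

theorem summable_exp_neg_mul_covEigenvalue_rpow (hβ : 0 < β) (hL : 0 < L) {s t : ℝ}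
    (hs : s < 1 / 2) (ht : 0 < t) :
    Summable fun k : ℤ => exp (-t * covEigenvalue β m L k ^ (2 * s - 1)) := by
  have hc : 0 < t * (β * (2 * π / L) ^ 2) ^ (1 - 2 * s) := by positivity
  refine (summable_int_exp_neg_mul_abs_rpow hc (by linarith : 0 < 2 * (1 - 2 * s))).of_nonneg_of_le
    (fun k => (exp_pos _).le) fun k => exp_le_exp.mpr ?_
  have := mul_le_mul_of_nonneg_left (le_covEigenvalue_rpow (m := m) (L := L) hβ k hs) ht.le
  linarith

end CovEigenvalue

theorem trace_heat_semigroup_finite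
    (β m L s : ℝ) (hβ : 0 < β) (hm : 0 < m) (hL : 0 < L)
    (hs : s < 1 / 2) (t : ℝ) (ht : 0 < t) :
    Summable (fun k : ℤ =>
        Real.exp (-t * (β⁻¹ * ((2 * π * k / L) ^ 2 + m ^ 2)⁻¹) ^ (2 * s - 1))) ∧
    Multipliable (fun k : ℤ =>
        1 - Real.exp (-t * (β⁻¹ * ((2 * π * k / L) ^ 2 + m ^ 2)⁻¹) ^ (2 * s - 1))) ∧
    (∏' k : ℤ,
        (1 - Real.exp (-t * (β⁻¹ * ((2 * π * k / L) ^ 2 + m ^ 2)⁻¹) ^ (2 * s - 1)))) ≠ 0 ∧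
    Multipliable (fun k : ℤ =>
        (1 - Real.exp (-t * (β⁻¹ * ((2 * π * k / L) ^ 2 + m ^ 2)⁻¹) ^ (2 * s - 1)))⁻¹) := by
  have hsum := summable_exp_neg_mul_covEigenvalue_rpow (m := m) hβ hL hs ht
  have hne_one : ∀ k, exp (-t * covEigenvalue β m L k ^ (2 * s - 1)) ≠ 1 := fun k =>
    (exp_lt_one_iff.mpr (mul_neg_of_neg_of_pos (neg_neg_of_pos ht)
      (rpow_pos_of_pos (covEigenvalue_pos hβ hm k) _))).ne
  have hmul := multipliable_one_sub_of_summable hsum.norm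
  have hprod := tprod_one_sub_ne_zero_of_summable hne_one hsum.norm
  exact ⟨hsum, hmul, hprod, hmul.inv₀ hprod⟩
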